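/- Let ω, N, R : ℝ → ℝ be differentiable at r₀ and satisfy: N(r₀) > 0, R(r₀) > 0, ω(r₀) > 0, ω'(r₀) < 0, N'(r₀) ≥ 0, R'(r₀) ≥ 0, (d/dr)[ω(r)·R(r)](r₀) < 0, and the ergoregion condition N(r₀) < ω(r₀)·R(r₀). Let m > 0, E < 0, and L ∈ ℝ satisfy the forward-in-time condition E − ω(r₀)L ≥ 0. Define Z²(r) = (E − ω(r)L)² − N(r)²·(m² + L²/R(r)²). If Z²(r₀) = 0, then (Z²)'(r₀) < 0. -/

import Mathlib

/-!
At a turning point `X² R² = N² (m² R² + L²) ≥ N² L²`, so `N |L| ≤ X R`; together with `E < 0`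
and `X ≥ 0` this forces `L < 0` and `X > 0`. In
`(Z²)'/2 = -X L ω' - N N' (m² + L²/R²) + N² L² R'/R³` the middle term is `≤ 0`, and the bounds
`N |L| ≤ X R` and `N < ω R` dominate the centrifugal term by `X |L| ω R'/R`, so
`(Z²)'/2 ≤ X |L| (ω R)'/R < 0`.
-/

noncomputable def Zsq (ω N R : ℝ → ℝ) (E L m r : ℝ) : ℝ :=
  (E - ω r * L) ^ 2 - N r ^ 2 * (m ^ 2 + L ^ 2 / R r ^ 2)

theorem hasDerivAt_Zsq {ω N R : ℝ → ℝ} {ω' N' R' E L m r : ℝ} (hω : HasDerivAt ω ω' r)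
    (hN : HasDerivAt N N' r) (hR : HasDerivAt R R' r) (hR0 : R r ≠ 0) :
    HasDerivAt (Zsq ω N R E L m)
      (2 * ((E - ω r * L) * (-ω' * L) - N r * N' * (m ^ 2 + L ^ 2 / R r ^ 2)
        + N r ^ 2 * L ^ 2 * R' / R r ^ 3)) r := by
  have hX := ((hω.mul_const L).const_sub E).fun_pow 2
  have hC := ((hasDerivAt_const r (L ^ 2)).fun_div (hR.fun_pow 2) (pow_ne_zero 2 hR0)).const_add
    (m ^ 2)
  refine (hX.fun_sub ((hN.fun_pow 2).fun_mul hC)).congr_deriv ?_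
  field_simp
  ring

theorem pos_of_sq_eq_sq_mul {X n ρ m L : ℝ} (hX : 0 ≤ X) (hn : n ≠ 0) (hρ : ρ ≠ 0) (hL : L ≠ 0)
    (h : X ^ 2 = n ^ 2 * (m ^ 2 + L ^ 2 / ρ ^ 2)) : 0 < X := by
  refine hX.lt_of_ne fun hX0 => ?_
  have : 0 < n ^ 2 * (m ^ 2 + L ^ 2 / ρ ^ 2) := by positivity
  rw [← h, ← hX0] at this
  norm_num at this

theorem mul_abs_le_of_sq_eq_sq_mul {X n ρ m L : ℝ} (hX : 0 ≤ X) (hn : 0 ≤ n) (hρ : 0 < ρ)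
    (h : X ^ 2 = n ^ 2 * (m ^ 2 + L ^ 2 / ρ ^ 2)) : n * |L| ≤ X * ρ := by
  rw [← abs_of_nonneg hn, ← abs_mul]
  refine abs_le_of_sq_le_sq ?_ (by positivity)
  have : (X * ρ) ^ 2 = (n * L) ^ 2 + n ^ 2 * m ^ 2 * ρ ^ 2 := by
    rw [mul_pow, h]
    field_simp
    ring
  nlinarith [sq_nonneg (n * m * ρ)]

theorem half_deriv_Zsq_neg_of_ergoregion {X L a a' n n' ρ ρ' m : ℝ} (hX : 0 < X) (hL : L < 0)
    (hn : 0 ≤ n) (hρ : 0 < ρ) (hn' : 0 ≤ n') (hρ' : 0 ≤ ρ') (haρ' : a' * ρ + a * ρ' < 0)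
    (hergo : n < a * ρ) (hbound : n * |L| ≤ X * ρ) :
    X * (-a' * L) - n * n' * (m ^ 2 + L ^ 2 / ρ ^ 2) + n ^ 2 * L ^ 2 * ρ' / ρ ^ 3 < 0 := by
  rw [abs_of_neg hL] at hbound
  have hXL : 0 < X * -L := mul_pos hX (neg_pos.mpr hL)
  calc X * (-a' * L) - n * n' * (m ^ 2 + L ^ 2 / ρ ^ 2) + n ^ 2 * L ^ 2 * ρ' / ρ ^ 3
      ≤ X * -L * a' + (n * -L) * (n * -L) * ρ' / ρ ^ 3 := by
        have : 0 ≤ n * n' * (m ^ 2 + L ^ 2 / ρ ^ 2) := by positivity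
        rw [show n ^ 2 * L ^ 2 = (n * -L) * (n * -L) by ring]
        linarith [show X * (-a' * L) = X * -L * a' by ring]
    _ ≤ X * -L * a' + (n * -L) * (X * ρ) * ρ' / ρ ^ 3 := by
        gcongr
        exact mul_nonneg hn (neg_pos.mpr hL).le
    _ ≤ X * -L * a' + ((a * ρ) * -L) * (X * ρ) * ρ' / ρ ^ 3 := by
        gcongr
        exact (neg_pos.mpr hL).le
    _ = X * -L * (a' * ρ + a * ρ') / ρ := by field_simp; ring
    _ < 0 := div_neg_of_neg_of_pos (mul_neg_of_pos_of_neg hXL haρ') hρ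

theorem Zsq_zero_implies_deriv_neg_general
    (ω N R : ℝ → ℝ) (r₀ E L m : ℝ)
    (hω : DifferentiableAt ℝ ω r₀) (hN : DifferentiableAt ℝ N r₀)
    (hR : DifferentiableAt ℝ R r₀)
    (hN0 : 0 < N r₀) (hR0 : 0 < R r₀) (hω0 : 0 < ω r₀)
    (hN' : 0 ≤ deriv N r₀) (hR' : 0 ≤ deriv R r₀)
    (hωR' : deriv (fun r => ω r * R r) r₀ < 0)
    (hergo : N r₀ < ω r₀ * R r₀)
    (hE : E < 0) (hX : 0 ≤ E - ω r₀ * L)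
    (hZ : (E - ω r₀ * L)^2 - (N r₀)^2 * (m^2 + L^2 / (R r₀)^2) = 0) :
    deriv (fun r => (E - ω r * L)^2 - (N r)^2 * (m^2 + L^2 / (R r)^2)) r₀ < 0 := by
  have hL : L < 0 := neg_of_mul_neg_right (by linarith) hω0.le
  have hturn := sub_eq_zero.mp hZ
  have hXpos := pos_of_sq_eq_sq_mul hX hN0.ne' hR0.ne' hL.ne hturn
  have hbound := mul_abs_le_of_sq_eq_sq_mul hX hN0.le hR0 hturn
  rw [deriv_fun_mul hω hR] at hωR'
  change deriv (Zsq ω N R E L m) r₀ < 0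
  rw [(hasDerivAt_Zsq hω.hasDerivAt hN.hasDerivAt hR.hasDerivAt hR0.ne').deriv]
  have hneg :=
    half_deriv_Zsq_neg_of_ergoregion hXpos hL hN0.le hR0 hN' hR' hωR' hergo hbound (m := m)
  linarith

/-- Under the monotonicity conditions and (ωR)' < 0, in the ergoregion,
if Z²(r₀) = 0 then (Z²)'(r₀) < 0. -/
theorem Zsq_zero_implies_deriv_neg
    (ω N R : ℝ → ℝ) (r₀ E L m : ℝ)
    (hω : DifferentiableAt ℝ ω r₀) (hN : DifferentiableAt ℝ N r₀)
    (hR : DifferentiableAt ℝ R r₀)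
    (hN0 : 0 < N r₀) (hR0 : 0 < R r₀) (hω0 : 0 < ω r₀)
    (hω' : deriv ω r₀ < 0) (hN' : 0 ≤ deriv N r₀) (hR' : 0 ≤ deriv R r₀)
    (hωR' : deriv (fun r => ω r * R r) r₀ < 0)
    (hergo : N r₀ < ω r₀ * R r₀)
    (hm : 0 < m) (hE : E < 0) (hX : 0 ≤ E - ω r₀ * L)
    (hZ : (E - ω r₀ * L)^2 - (N r₀)^2 * (m^2 + L^2 / (R r₀)^2) = 0) :
    deriv (fun r => (E - ω r * L)^2 - (N r)^2 * (m^2 + L^2 / (R r)^2)) r₀ < 0 :=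
  Zsq_zero_implies_deriv_neg_general ω N R r₀ E L m hω hN hR hN0 hR0 hω0 hN' hR' hωR' hergo hE hX hZ
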